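/- arXiv:math/0203226 — 3 statements merged into one kernel-verified Lean document; each statement's English description precedes it below -/
import Mathlib

section
/- For all k ≥ 0 and all n ≥ k, |S_n(E^k({123, 132, 213}))| = (n!/(n−k)!)·F_{n+1−k}, where F_m denotes the m-th Fibonacci number. -/
/-- `π` contains `σ` as a pattern: there is a subsequence of `π` (in one-line notation)
whose entries are in the same relative order as those of `σ`. -/
def PContains {n k : ℕ} (π : Equiv.Perm (Fin n)) (σ : Equiv.Perm (Fin k)) : Prop :=
  ∃ f : Fin k → Fin n, StrictMono f ∧ ∀ s t : Fin k, π (f s) < π (f t) ↔ σ s < σ t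

/-- `π` avoids the pattern `σ`. -/
def PAvoids {n k : ℕ} (π : Equiv.Perm (Fin n)) (σ : Equiv.Perm (Fin k)) : Prop :=
  ¬ PContains π σ

/-- `β` (a permutation of `{1,…,m+1}`) is an extension of `α` (a permutation of `{1,…,m}`):
deleting the largest entry from the one-line notation of `β` yields the one-line
notation of `α`.  (Zero-indexed: the positions other than `β⁻¹ (Fin.last m)`, taken in
order via `Fin.succAbove`, carry the values of `α`.) -/
def IsExtension {m : ℕ} (β : Equiv.Perm (Fin (m + 1))) (α : Equiv.Perm (Fin m)) : Prop :=
  ∀ i : Fin m, (α i : ℕ) = (β ((β⁻¹ (Fin.last m)).succAbove i) : ℕ)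

/-- The extension `E(R)` of a set `R` of permutations (of arbitrary lengths):
all permutations that are extensions of some element of `R`. -/
def PermExt (R : Set ((n : ℕ) × Equiv.Perm (Fin n))) : Set ((n : ℕ) × Equiv.Perm (Fin n)) :=
  { p | ∃ (m : ℕ) (β : Equiv.Perm (Fin (m + 1))) (α : Equiv.Perm (Fin m)),
      p = ⟨m + 1, β⟩ ∧ (⟨m, α⟩ : (n : ℕ) × Equiv.Perm (Fin n)) ∈ R ∧ IsExtension β α }

/-- `|S_n(R)|`: the number of permutations of `{1,…,n}` avoiding every pattern in the
set `R` of permutations of arbitrary lengths. -/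
noncomputable def SnCard (n : ℕ) (R : Set ((n : ℕ) × Equiv.Perm (Fin n))) : ℕ :=
  Nat.card {π : Equiv.Perm (Fin n) // ∀ σ ∈ R, PAvoids π σ.2}

/-- The pattern 123 (the identity permutation of `{1,2,3}`). -/
def p123 : Equiv.Perm (Fin 3) := Equiv.refl (Fin 3)

/-- The pattern 132 (one-line notation `1,3,2`, zero-indexed `0,2,1`). -/
noncomputable def p132 : Equiv.Perm (Fin 3) := Equiv.ofBijective ![0, 2, 1] (by decide)

/-- The pattern 213 (one-line notation `2,1,3`, zero-indexed `1,0,2`). -/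
noncomputable def p213 : Equiv.Perm (Fin 3) := Equiv.ofBijective ![1, 0, 2] (by decide)

/-!
Deleting the largest entry of `π ∈ S_{n+1}` leaves a permutation `π'` of `{1,…,n}`, and
`π ↦ (position of n+1, π')` is a bijection `S_{n+1} ≃ [n+1] × S_n`. An occurrence of an extension
`β` of `α` in `π` loses its largest entry to become an occurrence of `α` in `π'`; conversely an
occurrence of `α` in `π'`, together with the position of `n+1`, is an occurrence in `π` of some
extension of `α`. Hence `π` avoids `E(R)` iff `π'` avoids `R`, so `|S_{n+1}(E(R))| = (n+1)|S_n(R)|`,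
and the theorem reduces to `k = 0`.

A permutation avoids `123`, `132` and `213` iff `π k < π i` whenever `k ≥ i + 2`. In such a
permutation of length `n + 2` the maximum is in position `0`, or in position `1` with the second
largest entry in position `0`. Deleting the maximum, respectively the two largest entries, shows
that the numbers `a_n` of these permutations satisfy `a_{n+2} = a_{n+1} + a_n`.
-/

open Equiv

section

variable {n m : ℕ}

theorem Fin.val_succAbove (p : Fin (n + 1)) (i : Fin n) :
    (p.succAbove i : ℕ) = if (i : ℕ) < p then (i : ℕ) else i + 1 := by
  simp only [Fin.succAbove, Fin.lt_def, Fin.val_castSucc]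
  split_ifs <;> simp

namespace Equiv.Perm

theorem apply_inv_last (π : Perm (Fin (n + 1))) : π (π⁻¹ (Fin.last n)) = Fin.last n :=
  π.apply_symm_apply _

noncomputable def eraseMax (π : Perm (Fin (n + 1))) : Perm (Fin n) :=
  Equiv.ofBijective
    (fun i => (π ((π⁻¹ (Fin.last n)).succAbove i)).castPred fun h =>
      Fin.succAbove_ne _ i (π.injective (h.trans π.apply_inv_last.symm)))
    (Finite.injective_iff_bijective.mp fun _ _ hab =>
      Fin.succAbove_right_injective (π.injective (Fin.castPred_inj.mp hab)))

theorem castSucc_eraseMax_apply (π : Perm (Fin (n + 1))) (i : Fin n) :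
    (π.eraseMax i).castSucc = π ((π⁻¹ (Fin.last n)).succAbove i) := by
  simp [eraseMax]

theorem eraseMax_lt_eraseMax_iff (π : Perm (Fin (n + 1))) (a b : Fin n) :
    π.eraseMax a < π.eraseMax b ↔
      π ((π⁻¹ (Fin.last n)).succAbove a) < π ((π⁻¹ (Fin.last n)).succAbove b) := by
  rw [← Fin.castSucc_lt_castSucc_iff, castSucc_eraseMax_apply, castSucc_eraseMax_apply]

theorem apply_succAbove_inv_last_lt_last (π : Perm (Fin (n + 1))) (i : Fin n) :
    π ((π⁻¹ (Fin.last n)).succAbove i) < Fin.last n := by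
  rw [← castSucc_eraseMax_apply]
  exact Fin.castSucc_lt_last _

noncomputable def insertMax (p : Fin (n + 1)) (τ : Perm (Fin n)) : Perm (Fin (n + 1)) :=
  (finSuccEquiv' p).trans ((optionCongr τ).trans (finSuccEquiv' (Fin.last n)).symm)

@[simp]
theorem insertMax_apply_self (p : Fin (n + 1)) (τ : Perm (Fin n)) :
    insertMax p τ p = Fin.last n := by
  simp [insertMax, finSuccEquiv'_at, finSuccEquiv'_symm_none]

@[simp]
theorem insertMax_apply_succAbove (p : Fin (n + 1)) (τ : Perm (Fin n)) (j : Fin n) :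
    insertMax p τ (p.succAbove j) = (τ j).castSucc := by
  simp [insertMax, finSuccEquiv'_succAbove, finSuccEquiv'_symm_some, Fin.succAbove_last]

@[simp]
theorem insertMax_inv_last (p : Fin (n + 1)) (τ : Perm (Fin n)) :
    (insertMax p τ)⁻¹ (Fin.last n) = p := by
  rw [Perm.inv_eq_iff_eq, insertMax_apply_self]

@[simp]
theorem eraseMax_insertMax (p : Fin (n + 1)) (τ : Perm (Fin n)) : (insertMax p τ).eraseMax = τ :=
  Equiv.ext fun j => Fin.castSucc_injective _ <| by
    rw [castSucc_eraseMax_apply, insertMax_inv_last, insertMax_apply_succAbove]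

theorem insertMax_eraseMax (π : Perm (Fin (n + 1))) :
    insertMax (π⁻¹ (Fin.last n)) π.eraseMax = π := by
  ext1 i
  obtain rfl | ⟨j, rfl⟩ := Fin.eq_self_or_eq_succAbove (π⁻¹ (Fin.last n)) i
  · rw [insertMax_apply_self, apply_inv_last]
  · rw [insertMax_apply_succAbove, castSucc_eraseMax_apply]

theorem apply_eq_last_of_forall_lt {ρ : Perm (Fin (n + 1))} {i : Fin (n + 1)}
    (h : ∀ k, k ≠ i → ρ k < ρ i) : ρ i = Fin.last n := by
  by_contra hne
  have hlt := h (ρ⁻¹ (Fin.last n)) fun e => hne (e ▸ ρ.apply_inv_last)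
  exact (Fin.le_last _).not_gt (ρ.apply_inv_last ▸ hlt)

end Equiv.Perm

open Perm

theorem isExtension_iff_eq_eraseMax {β : Perm (Fin (m + 1))} {α : Perm (Fin m)} :
    IsExtension β α ↔ α = β.eraseMax := by
  simp only [IsExtension, Perm.ext_iff, Fin.ext_iff, ← castSucc_eraseMax_apply, Fin.val_castSucc]

theorem lt_iff_lt_of_succAbove_lt_iff {X Y : Type*} [LinearOrder X] [LinearOrder Y]
    {g : Fin (m + 1) → X} {g' : Fin (m + 1) → Y} {r : Fin (m + 1)}
    (hg : ∀ j, g (r.succAbove j) < g r) (hg' : ∀ j, g' (r.succAbove j) < g' r)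
    (h : ∀ a b, g (r.succAbove a) < g (r.succAbove b) ↔ g' (r.succAbove a) < g' (r.succAbove b))
    (s t : Fin (m + 1)) : g s < g t ↔ g' s < g' t := by
  obtain hs | ⟨a, hs⟩ := Fin.eq_self_or_eq_succAbove r s <;>
    obtain ht | ⟨b, ht⟩ := Fin.eq_self_or_eq_succAbove r t <;> subst s t
  · simp
  · exact iff_of_false (lt_asymm (hg b)) (lt_asymm (hg' b))
  · exact iff_of_true (hg a) (hg' a)
  · exact h a b

theorem StrictMono.exists_succAbove_eq {X : Type*} [LinearOrder X] {F : Fin m → X}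
    (hF : StrictMono F) {p : X} (hp : p ∉ Set.range F) :
    ∃ (r : Fin (m + 1)) (G : Fin (m + 1) → X),
      StrictMono G ∧ G r = p ∧ ∀ j, G (r.succAbove j) = F j := by
  classical
  set T := insert p (Finset.univ.image F)
  have hT : T.card = m + 1 := by
    rw [Finset.card_insert_of_notMem (by simpa using hp),
      Finset.card_image_of_injective _ hF.injective, Finset.card_univ, Fintype.card_fin]
  set G := T.orderEmbOfFin hT
  have hrange : Set.range G = insert p (Set.range F) := by
    simp [G, T, Finset.range_orderEmbOfFin]
  obtain ⟨r, hr⟩ : p ∈ Set.range G := hrange ▸ Set.mem_insert _ _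
  refine ⟨r, G, G.strictMono, hr, congrFun ?_⟩
  refine ((G.strictMono.comp (Fin.strictMono_succAbove r)).range_inj hF).mp ?_
  rw [Set.range_comp, Fin.range_succAbove, Set.compl_eq_univ_sdiff,
    Set.image_sdiff G.injective, Set.image_univ, Set.image_singleton, hr, hrange,
    Set.insert_sdiff_self_of_notMem hp]

theorem PContains.eraseMax {π : Perm (Fin (n + 1))} {β : Perm (Fin (m + 1))}
    (h : PContains π β) : PContains π.eraseMax β.eraseMax := by
  obtain ⟨G, hG, hGβ⟩ := h
  have hne (j : Fin m) : G ((β⁻¹ (Fin.last m)).succAbove j) ≠ π⁻¹ (Fin.last n) := by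
    intro hj
    have hlt := (hGβ _ _).mpr ((β.apply_succAbove_inv_last_lt_last j).trans_eq
      β.apply_inv_last.symm)
    rw [hj, apply_inv_last] at hlt
    exact (Fin.le_last _).not_gt hlt
  choose f hf using fun j => Fin.exists_succAbove_eq (hne j)
  refine ⟨f, fun a b hab => ?_, fun a b => ?_⟩
  · rw [← (Fin.strictMono_succAbove _).lt_iff_lt, hf, hf]
    exact hG (Fin.strictMono_succAbove _ hab)
  · rw [eraseMax_lt_eraseMax_iff, eraseMax_lt_eraseMax_iff, hf, hf]
    exact hGβ _ _

theorem PContains.exists_isExtension_of_eraseMax {π : Perm (Fin (n + 1))} {α : Perm (Fin m)}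
    (h : PContains π.eraseMax α) : ∃ β : Perm (Fin (m + 1)), IsExtension β α ∧ PContains π β := by
  obtain ⟨f, hf, hfα⟩ := h
  obtain ⟨r, G, hG, hGr, hGf⟩ :=
    ((Fin.strictMono_succAbove (π⁻¹ (Fin.last n))).comp hf).exists_succAbove_eq
      (p := π⁻¹ (Fin.last n)) (by simp [Fin.succAbove_ne])
  refine ⟨insertMax r α, isExtension_iff_eq_eraseMax.mpr (eraseMax_insertMax r α).symm, G, hG,
    lt_iff_lt_of_succAbove_lt_iff (r := r) (fun j => ?_) (fun j => ?_) (fun a b => ?_)⟩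
  · rw [hGr, hGf, apply_inv_last]
    exact π.apply_succAbove_inv_last_lt_last _
  · rw [insertMax_apply_self, insertMax_apply_succAbove]
    exact Fin.castSucc_lt_last _
  · rw [hGf, hGf, insertMax_apply_succAbove, insertMax_apply_succAbove,
      Fin.castSucc_lt_castSucc_iff, ← hfα]
    exact (eraseMax_lt_eraseMax_iff π _ _).symm

theorem avoids_permExt_iff {R : Set ((k : ℕ) × Perm (Fin k))} {π : Perm (Fin (n + 1))} :
    (∀ σ ∈ PermExt R, PAvoids π σ.2) ↔ ∀ σ ∈ R, PAvoids π.eraseMax σ.2 := by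
  constructor
  · rintro H ⟨m, α⟩ hα hcon
    obtain ⟨β, hβ, hπβ⟩ := hcon.exists_isExtension_of_eraseMax
    exact H ⟨m + 1, β⟩ ⟨m, β, α, rfl, hα, hβ⟩ hπβ
  · rintro H σ ⟨m, β, α, rfl, hα, hβ⟩ hcon
    exact H ⟨m, α⟩ hα (isExtension_iff_eq_eraseMax.mp hβ ▸ hcon.eraseMax)

theorem snCard_permExt (R : Set ((k : ℕ) × Perm (Fin k))) (n : ℕ) :
    SnCard (n + 1) (PermExt R) = (n + 1) * SnCard n R := by
  let e : {π : Perm (Fin (n + 1)) // ∀ σ ∈ PermExt R, PAvoids π σ.2} ≃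
      Fin (n + 1) × {τ : Perm (Fin n) // ∀ σ ∈ R, PAvoids τ σ.2} :=
    { toFun π := (π.1⁻¹ (Fin.last n), ⟨π.1.eraseMax, avoids_permExt_iff.mp π.2⟩)
      invFun x := ⟨insertMax x.1 x.2.1, avoids_permExt_iff.mpr (by simpa using x.2.2)⟩
      left_inv π := Subtype.ext (insertMax_eraseMax π.1)
      right_inv x := by simp }
  rw [SnCard, SnCard, Nat.card_congr e, Nat.card_prod, Nat.card_eq_fintype_card (α := Fin _),
    Fintype.card_fin]

theorem pcontains_of_forall_lt_imp {π : Perm (Fin n)} {σ : Perm (Fin m)} {f : Fin m → Fin n}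
    (hf : StrictMono f) (h : ∀ s t, σ s < σ t → π (f s) < π (f t)) : PContains π σ := by
  refine ⟨f, hf, fun s t => ⟨fun hst => ?_, h s t⟩⟩
  rcases lt_trichotomy (σ s) (σ t) with hlt | heq | hgt
  · exact hlt
  · exact absurd hst (σ.injective heq ▸ lt_irrefl _)
  · exact absurd hst (lt_asymm (h t s hgt))

theorem strictMono_vecCons_three {X : Type*} [Preorder X] {a b c : X} (hab : a < b)
    (hbc : b < c) : StrictMono ![a, b, c] := by
  rw [Fin.strictMono_iff_lt_succ]
  intro s
  fin_cases s
  exacts [hab, hbc]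

def IsFarDecreasing {N : ℕ} (π : Perm (Fin N)) : Prop :=
  ∀ i k : Fin N, (i : ℕ) + 2 ≤ k → π k < π i

theorem PAvoids.of_isFarDecreasing {π : Perm (Fin n)} (hπ : IsFarDecreasing π)
    {σ : Perm (Fin 3)} (hσ : σ 0 < σ 2) : PAvoids π σ := by
  rintro ⟨f, hf, hfσ⟩
  have h02 : (f 0 : ℕ) + 2 ≤ f 2 := by
    have h01 : f 0 < f 1 := hf (by decide)
    have h12 : f 1 < f 2 := hf (by decide)
    rw [Fin.lt_def] at h01 h12
    omega
  exact lt_asymm (hπ _ _ h02) ((hfσ 0 2).mpr hσ)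

/-- An ascent `π i < π k` with `k ≥ i + 2` together with the entry at `i + 1` forms a `123`,
`132` or `213`. -/
theorem IsFarDecreasing.of_avoids {π : Perm (Fin n)} (h123 : PAvoids π p123)
    (h132 : PAvoids π p132) (h213 : PAvoids π p213) : IsFarDecreasing π := by
  intro i k hik
  by_contra hki
  have hik' : π i < π k := (not_lt.mp hki).lt_of_ne fun h => by
    have := congrArg Fin.val (π.injective h)
    omega
  set j : Fin n := ⟨i + 1, by omega⟩
  have hij : i < j := Fin.lt_def.mpr (Nat.lt_succ_self _)
  have hjk : j < k := Fin.lt_def.mpr (by simp only [j]; omega)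
  have hf : StrictMono ![i, j, k] := strictMono_vecCons_three hij hjk
  rcases lt_or_gt_of_ne (π.injective.ne hij.ne') with hji | hij'
  · refine h213 (pcontains_of_forall_lt_imp hf fun s t hst => ?_)
    fin_cases s <;> fin_cases t <;> simp_all [p213, hji.trans hik']
  · rcases lt_or_gt_of_ne (π.injective.ne hjk.ne) with hjk' | hkj
    · refine h123 (pcontains_of_forall_lt_imp hf fun s t hst => ?_)
      fin_cases s <;> fin_cases t <;> simp_all [p123]
    · refine h132 (pcontains_of_forall_lt_imp hf fun s t hst => ?_)
      fin_cases s <;> fin_cases t <;> simp_all [p132]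

theorem avoids_p123_p132_p213_iff {π : Perm (Fin n)} :
    (∀ σ ∈ ({⟨3, p123⟩, ⟨3, p132⟩, ⟨3, p213⟩} : Set ((k : ℕ) × Perm (Fin k))),
      PAvoids π σ.2) ↔ IsFarDecreasing π := by
  simp only [Set.mem_insert_iff, Set.mem_singleton_iff, forall_eq_or_imp, forall_eq]
  exact ⟨fun ⟨h123, h132, h213⟩ => .of_avoids h123 h132 h213, fun h =>
    ⟨.of_isFarDecreasing h (by decide), .of_isFarDecreasing h (by decide),
      .of_isFarDecreasing h (by decide)⟩⟩

theorem IsFarDecreasing.eraseMax {π : Perm (Fin (n + 1))} (h : IsFarDecreasing π) :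
    IsFarDecreasing π.eraseMax := by
  intro j k hjk
  rw [eraseMax_lt_eraseMax_iff]
  apply h
  simp only [Fin.val_succAbove]
  split_ifs <;> omega

theorem IsFarDecreasing.insertMax_zero {τ : Perm (Fin n)} (h : IsFarDecreasing τ) :
    IsFarDecreasing (insertMax 0 τ) := by
  intro i k hik
  obtain ⟨l, rfl⟩ := Fin.exists_succAbove_eq (x := k) (y := 0) (by rintro rfl; simp at hik)
  rw [insertMax_apply_succAbove]
  obtain rfl | ⟨j, rfl⟩ := Fin.eq_self_or_eq_succAbove 0 i
  · rw [insertMax_apply_self]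
    exact Fin.castSucc_lt_last _
  rw [insertMax_apply_succAbove, Fin.castSucc_lt_castSucc_iff]
  exact h j l (by simp only [Fin.zero_succAbove, Fin.val_succ] at hik; omega)

theorem IsFarDecreasing.insertMax_one {ρ : Perm (Fin (n + 1))} (h : IsFarDecreasing ρ)
    (h0 : ρ 0 = Fin.last n) : IsFarDecreasing (insertMax 1 ρ) := by
  intro i k hik
  obtain ⟨l, rfl⟩ := Fin.exists_succAbove_eq (x := k) (y := 1) (by rintro rfl; simp at hik)
  rw [insertMax_apply_succAbove]
  obtain rfl | ⟨j, rfl⟩ := Fin.eq_self_or_eq_succAbove 1 i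
  · rw [insertMax_apply_self]
    exact Fin.castSucc_lt_last _
  rw [insertMax_apply_succAbove, Fin.castSucc_lt_castSucc_iff]
  rcases eq_or_ne j 0 with rfl | hj
  · rw [h0, Fin.lt_last_iff_ne_last, ← h0]
    rintro hl
    rw [ρ.injective hl] at hik
    simp at hik
  · have hj : (j : ℕ) ≠ 0 := Fin.val_ne_zero_iff.mpr hj
    rw [Fin.val_succAbove, Fin.val_succAbove, Fin.val_one] at hik
    exact h j l (by split_ifs at hik <;> omega)

theorem IsFarDecreasing.inv_last_eq_one {π : Perm (Fin (n + 2))} (h : IsFarDecreasing π)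
    (h0 : π 0 ≠ Fin.last (n + 1)) : π⁻¹ (Fin.last (n + 1)) = 1 := by
  have hp2 : (π⁻¹ (Fin.last (n + 1)) : ℕ) < 2 := by
    by_contra hge
    have hlt := h 0 (π⁻¹ (Fin.last (n + 1))) (by simp only [Fin.val_zero]; omega)
    exact (Fin.le_last _).not_gt (π.apply_inv_last ▸ hlt)
  have hp0 : (π⁻¹ (Fin.last (n + 1)) : ℕ) ≠ 0 :=
    Fin.val_ne_zero_iff.mpr fun e => h0 (e ▸ π.apply_inv_last)
  exact Fin.ext (by rw [Fin.val_one]; omega)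

theorem IsFarDecreasing.eraseMax_apply_zero {π : Perm (Fin (n + 2))} (h : IsFarDecreasing π)
    (h0 : π 0 ≠ Fin.last (n + 1)) : π.eraseMax 0 = Fin.last n := by
  refine apply_eq_last_of_forall_lt fun q hq => ?_
  have hq : (q : ℕ) ≠ 0 := Fin.val_ne_zero_iff.mpr hq
  rw [eraseMax_lt_eraseMax_iff, h.inv_last_eq_one h0]
  refine h _ _ ?_
  rw [Fin.one_succAbove_zero, Fin.val_zero, Fin.val_succAbove, Fin.val_one]
  split_ifs <;> omega

theorem card_isFarDecreasing_apply_zero_eq_last (N : ℕ) :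
    Nat.card {π : Perm (Fin (N + 1)) // IsFarDecreasing π ∧ π 0 = Fin.last N} =
      Nat.card {τ : Perm (Fin N) // IsFarDecreasing τ} :=
  Nat.card_congr
    { toFun π := ⟨π.1.eraseMax, π.2.1.eraseMax⟩
      invFun τ := ⟨insertMax 0 τ.1, τ.2.insertMax_zero, insertMax_apply_self 0 τ.1⟩
      left_inv := fun ⟨π, _, h0⟩ => Subtype.ext <| by
        simpa only [Perm.inv_eq_iff_eq.mpr h0.symm] using insertMax_eraseMax π
      right_inv τ := Subtype.ext (eraseMax_insertMax 0 τ.1) }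

theorem card_isFarDecreasing_apply_zero_ne_last (n : ℕ) :
    Nat.card {π : Perm (Fin (n + 2)) // IsFarDecreasing π ∧ π 0 ≠ Fin.last (n + 1)} =
      Nat.card {ρ : Perm (Fin (n + 1)) // IsFarDecreasing ρ ∧ ρ 0 = Fin.last n} :=
  Nat.card_congr
    { toFun π := ⟨π.1.eraseMax, π.2.1.eraseMax, π.2.1.eraseMax_apply_zero π.2.2⟩
      invFun ρ := ⟨insertMax 1 ρ.1, ρ.2.1.insertMax_one ρ.2.2, by
        rw [← Fin.one_succAbove_zero, insertMax_apply_succAbove]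
        exact (Fin.castSucc_lt_last _).ne⟩
      left_inv := fun ⟨π, h, h0⟩ => Subtype.ext <| by
        simpa only [h.inv_last_eq_one h0] using insertMax_eraseMax π
      right_inv ρ := Subtype.ext (eraseMax_insertMax 1 ρ.1) }

theorem Nat.card_subtype_and_add_card_subtype_and_not {α : Type*} [Finite α] (p q : α → Prop) :
    Nat.card {x // p x ∧ q x} + Nat.card {x // p x ∧ ¬q x} = Nat.card {x // p x} := by
  classical
  rw [← Nat.card_congr (Equiv.subtypeSubtypeEquivSubtypeInter p q),
    ← Nat.card_congr (Equiv.subtypeSubtypeEquivSubtypeInter p fun x => ¬q x), ← Nat.card_sum,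
    Nat.card_congr (Equiv.sumCompl fun x : Subtype p => q x)]

theorem isFarDecreasing_of_le_one {N : ℕ} (hN : N ≤ 1) (π : Perm (Fin N)) :
    IsFarDecreasing π :=
  fun _ k _ => by have := k.isLt; omega

theorem card_isFarDecreasing (N : ℕ) :
    Nat.card {π : Perm (Fin N) // IsFarDecreasing π} = Nat.fib (N + 1) := by
  induction N using Nat.twoStepInduction with
  | zero | one =>
    rw [Nat.card_congr (Equiv.subtypeUnivEquiv (isFarDecreasing_of_le_one (by simp))),
      Nat.card_perm]
    simp
  | more n ih₀ ih₁ =>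
    rw [← Nat.card_subtype_and_add_card_subtype_and_not _ fun π : Perm (Fin (n + 2)) =>
        π 0 = Fin.last (n + 1), card_isFarDecreasing_apply_zero_eq_last, ih₁,
      card_isFarDecreasing_apply_zero_ne_last, card_isFarDecreasing_apply_zero_eq_last, ih₀,
      Nat.fib_add_two (n := n + 1), add_comm]

theorem snCard_p123_p132_p213 (n : ℕ) :
    SnCard n ({⟨3, p123⟩, ⟨3, p132⟩, ⟨3, p213⟩} : Set ((k : ℕ) × Perm (Fin k))) =
      Nat.fib (n + 1) := by
  rw [SnCard, Nat.card_congr (Equiv.subtypeEquivRight fun π => avoids_p123_p132_p213_iff),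
    card_isFarDecreasing]

end

/-- For all `k ≥ 0` and `n ≥ k`,
`|S_n(E^k({123,132,213}))| = (n!/(n-k)!) ⬝ F_{n+1-k}`. -/
theorem statement15 (k n : ℕ) (hkn : k ≤ n) :
    SnCard n (PermExt^[k]
        ({⟨3, p123⟩, ⟨3, p132⟩, ⟨3, p213⟩} : Set ((n : ℕ) × Equiv.Perm (Fin n)))) =
      Nat.descFactorial n k * Nat.fib (n + 1 - k) := by
  induction k generalizing n with
  | zero => simpa using snCard_p123_p132_p213 n
  | succ k ih =>
    obtain ⟨m, rfl⟩ : ∃ m, n = m + 1 := ⟨n - 1, by omega⟩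
    rw [Function.iterate_succ_apply', snCard_permExt, ih m (by omega),
      Nat.succ_descFactorial_succ, mul_assoc, Nat.add_sub_add_right]
end

section
/- Let k be a positive integer and fix an integer a with 1 ≤ a ≤ k. Then for all n ≥ k−1, |S_n(R^k_a)| = (k−1)!·(k−a)^{n−k+1}. -/
/-!
Write a permutation of `{0, …, n}` as its first value `p` followed by a permutation `τ` of
`{0, …, n - 1}`, relabelled around `p`. An occurrence of a pattern of `R^{k+1}_a` either avoids
the first position, and is then an occurrence in `τ`, or starts at `p`; the latter can be completed
exactly when at least `k + 1 - a` values lie above `p`. So `π` avoids `R^{k+1}_a` iff `τ` does and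
`p` is one of the top `k + 1 - a` values, giving `|S_{n+1}| = (k + 1 - a) |S_n|` for `n ≥ k`,
while every permutation of `{0, …, k - 1}` is too short to contain a pattern of length `k + 1`.
-/

open Finset Equiv

theorem exists_perm_lt_iff_lt_of_injective {α : Type*} [LinearOrder α] {k : ℕ}
    {g : Fin k → α} (hg : Function.Injective g) :
    ∃ σ : Perm (Fin k), ∀ s t, σ s < σ t ↔ g s < g t := by
  have hmono : StrictMono (g ∘ Tuple.sort g) :=
    (Tuple.monotone_sort g).strictMono_of_injective (hg.comp (Tuple.sort g).injective)
  refine ⟨(Tuple.sort g)⁻¹, fun s t => ?_⟩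
  rw [← hmono.lt_iff_lt]
  simp

theorem Equiv.Perm.card_filter_apply_lt_apply {k : ℕ} (σ : Perm (Fin k)) (s : Fin k) :
    #{t | σ t < σ s} = σ s := by
  rw [← Fin.card_Iio (σ s), ← card_map σ.toEmbedding, map_filter]
  congr 1
  ext y
  simp

/-- `π` contains a pattern of `R^{k+1}_a`: some `k + 1` of its entries, the first of which exceeds
fewer than `a` of the others. -/
def HasLowStart {N : ℕ} (π : Perm (Fin N)) (k a : ℕ) : Prop :=
  ∃ f : Fin (k + 1) → Fin N, StrictMono f ∧ #{t | π (f t) < π (f 0)} < a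

theorem forall_pAvoids_iff_not_hasLowStart {N k a : ℕ} (π : Perm (Fin N)) :
    (∀ σ : Perm (Fin (k + 1)), (σ 0 : ℕ) + 1 ≤ a → PAvoids π σ) ↔
      ¬ HasLowStart π k a := by
  constructor
  · rintro h ⟨f, hf, hlt⟩
    obtain ⟨σ, hσ⟩ := exists_perm_lt_iff_lt_of_injective (π.injective.comp hf.injective)
    refine h σ ?_ ⟨f, hf, fun s t => (hσ s t).symm⟩
    rw [← σ.card_filter_apply_lt_apply]
    simp only [hσ, Function.comp_apply]
    omega
  · rintro h σ hσ ⟨f, hf, hfσ⟩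
    refine h ⟨f, hf, ?_⟩
    simp only [hfσ, σ.card_filter_apply_lt_apply]
    omega

theorem le_card_filter_lt_add {m N : ℕ} {g : Fin m → Fin N} (hg : Function.Injective g)
    (v : Fin N) : m ≤ #{t | g t < v} + (N - v) := by
  have hge : #{t | ¬ g t < v} ≤ N - v := by
    rw [← Fin.card_Ici]
    refine card_le_card_of_injOn g (fun t ht => ?_) hg.injOn
    simpa using ht
  have := card_filter_add_card_filter_not (s := univ) (fun t => g t < v)
  simp only [card_univ, Fintype.card_fin] at this
  omega

theorem le_add_rev_of_card_filter_lt {n k a : ℕ} {π : Perm (Fin (n + 1))}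
    {f : Fin (k + 1) → Fin (n + 1)} (hf : Function.Injective f) (hf0 : f 0 = 0)
    (hlt : #{t | π (f t) < π (f 0)} < a) : k + 1 ≤ a + (π 0).rev := by
  have := le_card_filter_lt_add (π.injective.comp hf) (π 0)
  simp only [Function.comp_apply, hf0] at this hlt
  rw [Fin.val_rev]
  omega

theorem hasLowStart_of_le_add_rev {n k a : ℕ} (hkn : k ≤ n) (ha : 1 ≤ a)
    {π : Perm (Fin (n + 1))} (h : k + 1 ≤ a + (π 0).rev) : HasLowStart π k a := by
  set P : Finset (Fin (n + 1)) := {x | π 0 ≤ π x}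
  have hP : #P = n + 1 - π 0 := by
    rw [← Fin.card_Ici, ← card_map π.toEmbedding]
    congr 1
    ext x
    simp [P]
  rw [Fin.val_rev] at h
  have hp := (π 0).isLt
  -- the first position and as many positions of `P` as fit, padded to `k + 1` positions
  obtain ⟨T₀, h0T₀, hT₀P, hT₀⟩ := exists_subsuperset_card_eq (s := {0}) (t := P)
    (n := min (k + 1) #P) (by simp [P]) (by rw [card_singleton, hP]; omega) (min_le_right _ _)
  obtain ⟨T, hT₀T, -, hT⟩ := exists_subsuperset_card_eq (s := T₀) (t := univ) (n := k + 1)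
    (subset_univ _) (by omega) (by rw [card_univ, Fintype.card_fin]; omega)
  set f := T.orderEmbOfFin hT
  have hf0 : f 0 = 0 := by
    rw [← Fin.mk_zero, orderEmbOfFin_zero hT k.succ_pos]
    exact le_antisymm (min'_le _ _ (hT₀T (h0T₀ (mem_singleton_self 0)))) (Fin.zero_le _)
  refine ⟨f, f.strictMono, ?_⟩
  have : #{t | π (f t) < π (f 0)} ≤ #(T \ T₀) := by
    refine card_le_card_of_injOn f (fun t ht => ?_) f.injective.injOn
    simp only [hf0, coe_filter, mem_univ, true_and] at ht
    simp only [coe_sdiff]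
    exact ⟨orderEmbOfFin_mem T hT t, fun hm => not_lt.2 (by simpa [P] using hT₀P hm) ht⟩
  rw [card_sdiff_of_subset hT₀T] at this
  omega

def permCons {n : ℕ} (p : Fin (n + 1)) (τ : Perm (Fin n)) : Perm (Fin (n + 1)) :=
  (finSuccEquiv n).trans (τ.optionCongr.trans (finSuccEquiv' p).symm)

@[simp]
theorem permCons_zero {n : ℕ} (p : Fin (n + 1)) (τ : Perm (Fin n)) : permCons p τ 0 = p := by
  simp [permCons]

@[simp]
theorem permCons_succ {n : ℕ} (p : Fin (n + 1)) (τ : Perm (Fin n)) (i : Fin n) :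
    permCons p τ i.succ = p.succAbove (τ i) := by
  simp [permCons]

theorem permCons_injective {n : ℕ} :
    Function.Injective fun q : Fin (n + 1) × Perm (Fin n) => permCons q.1 q.2 := by
  rintro ⟨p, τ⟩ ⟨p', τ'⟩ h
  obtain rfl : p = p' := by simpa using congr($h 0)
  refine Prod.ext rfl (Equiv.ext fun i => p.succAbove_right_injective ?_)
  simpa using congr($h i.succ)

noncomputable def permConsEquiv (n : ℕ) : Fin (n + 1) × Perm (Fin n) ≃ Perm (Fin (n + 1)) :=
  Equiv.ofBijective _ <| (Fintype.bijective_iff_injective_and_card _).2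
    ⟨permCons_injective, by simp [Fintype.card_perm, Nat.factorial_succ]⟩

theorem hasLowStart_permCons_iff {n k a : ℕ} (hkn : k ≤ n) (ha : 1 ≤ a) (p : Fin (n + 1))
    (τ : Perm (Fin n)) :
    HasLowStart (permCons p τ) k a ↔ k + 1 ≤ a + p.rev ∨ HasLowStart τ k a := by
  constructor
  · rintro ⟨f, hf, hlt⟩
    by_cases hf0 : f 0 = 0
    · simpa using Or.inl (le_add_rev_of_card_filter_lt hf.injective hf0 hlt)
    · have hne (t : Fin (k + 1)) : f t ≠ 0 :=
        ((Fin.pos_iff_ne_zero.2 hf0).trans_le (hf.monotone (Fin.zero_le t))).ne'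
      refine Or.inr ⟨fun t => (f t).pred (hne t), fun s t hst => by simpa using hf hst, ?_⟩
      have hval : ∀ t, permCons p τ (f t) = p.succAbove (τ ((f t).pred (hne t))) := fun t => by
        rw [← permCons_succ, Fin.succ_pred]
      simpa only [hval, Fin.succAbove_lt_succAbove_iff] using hlt
  · rintro (h | ⟨g, hg, hlt⟩)
    · exact hasLowStart_of_le_add_rev hkn ha (by simpa using h)
    · refine ⟨Fin.succ ∘ g, Fin.strictMono_succ.comp hg, ?_⟩
      simpa [Fin.succAbove_lt_succAbove_iff] using hlt

theorem card_add_rev_le {n k : ℕ} (a : ℕ) (hkn : k ≤ n) :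
    Nat.card {p : Fin (n + 1) // a + p.rev ≤ k} = k + 1 - a := by
  rw [Nat.card_congr (Fin.revPerm.subtypeEquiv (q := fun q : Fin (n + 1) => a + q ≤ k)
    fun p => by simp), Nat.card_eq_fintype_card, Fintype.card_subtype,
    filter_congr (q := fun q : Fin (n + 1) => q < k + 1 - a) (fun q _ => by omega),
    Fin.card_filter_val_lt]
  omega

theorem card_not_hasLowStart_succ {n k a : ℕ} (hkn : k ≤ n) (ha : 1 ≤ a) :
    Nat.card {π : Perm (Fin (n + 1)) // ¬ HasLowStart π k a} =
      (k + 1 - a) * Nat.card {τ : Perm (Fin n) // ¬ HasLowStart τ k a} := by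
  calc Nat.card {π : Perm (Fin (n + 1)) // ¬ HasLowStart π k a}
      = Nat.card {q : Fin (n + 1) × Perm (Fin n) //
          a + q.1.rev ≤ k ∧ ¬ HasLowStart q.2 k a} :=
        Nat.card_congr <| ((permConsEquiv n).subtypeEquiv fun q => by
          simp [permConsEquiv, hasLowStart_permCons_iff hkn ha]).symm
    _ = Nat.card ({p : Fin (n + 1) // a + p.rev ≤ k} ×
          {τ : Perm (Fin n) // ¬ HasLowStart τ k a}) :=
        Nat.card_congr (Equiv.subtypeProdEquivProd (p := fun p : Fin (n + 1) => a + p.rev ≤ k)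
          (q := fun τ => ¬ HasLowStart τ k a))
    _ = _ := by rw [Nat.card_prod, card_add_rev_le a hkn]

theorem card_not_hasLowStart {n k a : ℕ} (hkn : k ≤ n) (ha : 1 ≤ a) :
    Nat.card {π : Perm (Fin n) // ¬ HasLowStart π k a} =
      k.factorial * (k + 1 - a) ^ (n - k) := by
  induction n, hkn using Nat.le_induction with
  | base =>
    have hall (π : Perm (Fin k)) : ¬ HasLowStart π k a := fun ⟨f, hf, _⟩ => by
      simpa using Fintype.card_le_of_injective f hf.injective
    rw [Nat.card_congr (Equiv.subtypeUnivEquiv hall)]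
    simp [Fintype.card_perm]
  | succ n hkn ih =>
    rw [card_not_hasLowStart_succ hkn ha, ih, Nat.succ_sub hkn, pow_succ]
    ring

theorem statement17_general (k a : ℕ) (hk : 1 ≤ k) (ha1 : 1 ≤ a)
    (n : ℕ) (hn : k - 1 ≤ n) :
    Nat.card {π : Equiv.Perm (Fin n) //
        ∀ σ : Equiv.Perm (Fin k), (σ ⟨0, hk⟩ : ℕ) + 1 ≤ a → PAvoids π σ} =
      Nat.factorial (k - 1) * (k - a) ^ (n + 1 - k) := by
  obtain ⟨k, rfl⟩ := Nat.exists_eq_add_of_le' hk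
  simp only [Fin.mk_zero, forall_pAvoids_iff_not_hasLowStart, Nat.add_sub_cancel,
    Nat.add_sub_add_right] at hn ⊢
  exact card_not_hasLowStart hn ha1

/-- Let `1 ≤ a ≤ k`.  The set `R^k_a` is the set of permutations `σ` of `{1,…,k}` with
`σ(1) ≤ a` (zero-indexed: `σ 0 + 1 ≤ a`).  For all `n ≥ k - 1`,
`|S_n(R^k_a)| = (k-1)! ⬝ (k-a)^{n-k+1}`. -/
theorem statement17 (k a : ℕ) (hk : 1 ≤ k) (ha1 : 1 ≤ a) (hak : a ≤ k)
    (n : ℕ) (hn : k - 1 ≤ n) :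
    Nat.card {π : Equiv.Perm (Fin n) //
        ∀ σ : Equiv.Perm (Fin k), (σ ⟨0, hk⟩ : ℕ) + 1 ≤ a → PAvoids π σ} =
      Nat.factorial (k - 1) * (k - a) ^ (n + 1 - k) :=
  statement17_general k a hk ha1 n hn
end

section
/- Let k ≥ 3 be an integer. Then for all n ≥ k, |S_n(R^k_{k−1,k−1})| = (k−2)!·(F_{n−k+4} + (k−3)·F_{n−k+2}), where F_m denotes the m-th Fibonacci number. -/
/-!
A pattern `σ` of length `k` lies in `R^k_{k-1,k-1}` exactly when some entry in a position `≥ 3`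
exceeds `σ(1)`: otherwise at most `σ(2)` is above `σ(1)`, so `σ(1) = k`, or `σ(1) = k - 1` and
`σ(2) = k`. Hence `π` avoids `R^k_{k-1,k-1}` iff every `π(i)` with `i ≤ n - k + 1` exceeds all
later entries except possibly `π(i + 1)`. By the same observation such a `π` of length `n ≥ k`
starts either with `n` followed by such a permutation of length `n - 1`, or with `n - 1, n`
followed by one of length `n - 2`. The counts therefore satisfy the Fibonacci recursion from
`n = k` on, with initial values `(k - 2)!` and `(k - 1)!` at lengths `k - 2` and `k - 1`,
where the condition is vacuous.
-/

open Equiv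

lemma exists_perm_lt_iff_lt {α : Type*} [LinearOrder α] {k : ℕ} (g : Fin k → α)
    (hg : Function.Injective g) : ∃ σ : Perm (Fin k), ∀ s t, g s < g t ↔ σ s < σ t := by
  have hmono : StrictMono (g ∘ Tuple.sort g) :=
    (Tuple.monotone_sort g).strictMono_of_injective (hg.comp (Tuple.sort g).injective)
  refine ⟨(Tuple.sort g)⁻¹, fun s t => ?_⟩
  simpa using hmono.lt_iff_lt (a := (Tuple.sort g)⁻¹ s) (b := (Tuple.sort g)⁻¹ t)

lemma Fin.val_add_le_of_strictMono {k n : ℕ} {f : Fin (k + 1) → Fin n} (hf : StrictMono f) :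
    (f 0 : ℕ) + (k + 1) ≤ n := by
  have hle (t : Fin (k + 1)) : (f 0 : ℕ) ≤ f t := hf.monotone (Fin.zero_le t)
  let g (t : Fin (k + 1)) : Fin (n - f 0) :=
    ⟨f t - f 0, by have := (f t).isLt; have := hle t; omega⟩
  have hg : Function.Injective g := fun s t hst => hf.injective <| Fin.ext <| by
    have := hle s; have := hle t; have := Fin.mk.inj hst; omega
  have := Fin.le_of_injective g hg
  omega

lemma exists_strictMono_apply_zero_eq {k n : ℕ} (hk : 3 ≤ k) {i j : Fin n} (hik : (i : ℕ) + k ≤ n)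
    (hij : (i : ℕ) + 2 ≤ j) :
    ∃ f : Fin k → Fin n, StrictMono f ∧ f ⟨0, by omega⟩ = i ∧
      ∃ t : Fin k, 2 ≤ (t : ℕ) ∧ f t = j := by
  -- positions `i, i + 1, …, i + k - 2`, then `max j (i + k - 1)`; `j` is among them
  refine ⟨fun t => ⟨if (t : ℕ) + 1 < k then i + t else max j (i + k - 1), by split_ifs <;> omega⟩,
    fun a b hab => ?_, Fin.ext (if_pos (show 0 + 1 < k by omega)), ?_⟩
  · simp only [Fin.lt_def] at hab ⊢
    split_ifs <;> omega
  · by_cases hj : (j : ℕ) + 1 < i + k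
    · exact ⟨⟨j - i, by omega⟩, by dsimp only; omega, Fin.ext (by dsimp only; split_ifs <;> omega)⟩
    · exact ⟨⟨k - 1, by omega⟩, by dsimp only; omega, Fin.ext (by dsimp only; split_ifs <;> omega)⟩

lemma Equiv.Perm.forall_lt_apply_zero_iff {m : ℕ} (σ : Perm (Fin (m + 2))) :
    (∀ t : Fin (m + 2), 2 ≤ (t : ℕ) → σ t < σ 0) ↔
      σ 0 = Fin.last (m + 1) ∨ (σ 0 = (Fin.last m).castSucc ∧ σ 1 = Fin.last (m + 1)) := by
  constructor
  · intro h
    have above : ∀ w, σ 0 < w → σ 1 = w := by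
      intro w hw
      obtain ⟨t, rfl⟩ := σ.surjective w
      have ht0 : (t : ℕ) ≠ 0 := fun h => hw.ne (congrArg σ (Fin.ext (by simp [h])))
      have ht2 : ¬ 2 ≤ (t : ℕ) := fun ht => lt_asymm hw (h t ht)
      rw [show t = 1 from Fin.ext (by rw [Fin.val_one]; omega)]
    by_cases h0 : σ 0 = Fin.last (m + 1)
    · exact Or.inl h0
    have hlt : σ 0 < Fin.last (m + 1) := lt_of_le_of_ne (Fin.le_last _) h0
    have h1 := above _ hlt
    refine Or.inr ⟨le_antisymm (Fin.le_castSucc_iff.2 (by rwa [Fin.succ_last]))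
      (not_lt.1 fun h2 => ?_), h1⟩
    exact (Fin.castSucc_lt_last _).ne ((above _ h2).symm.trans h1)
  · intro h t ht
    have h0 : (σ t : ℕ) ≠ σ 0 := fun e => by simp [σ.injective (Fin.ext e)] at ht
    have h1 : (σ t : ℕ) ≠ σ 1 := fun e => by simp [σ.injective (Fin.ext e)] at ht
    have := (σ t).isLt
    rw [Fin.lt_def]
    rcases h with h | ⟨h, h'⟩
    · simp only [h, Fin.val_last] at h0 ⊢
      omega
    · simp only [h, h', Fin.val_last, Fin.val_castSucc] at h0 h1 ⊢
      omega

lemma mem_R_iff {k : ℕ} (hk : 3 ≤ k) (σ : Perm (Fin k)) :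
    (((σ ⟨0, by omega⟩ : ℕ) + 1 = k - 1 ∧ (σ ⟨1, by omega⟩ : ℕ) + 1 = k - 1) ∨
        (σ ⟨0, by omega⟩ : ℕ) + 1 < k - 1 ∨
        ((σ ⟨0, by omega⟩ : ℕ) + 1 = k - 1 ∧ (σ ⟨1, by omega⟩ : ℕ) + 1 < k - 1)) ↔
      ¬ ∀ t : Fin k, 2 ≤ (t : ℕ) → σ t < σ ⟨0, by omega⟩ := by
  obtain ⟨m, rfl⟩ : ∃ m, k = m + 2 := ⟨k - 2, by omega⟩
  refine Iff.trans ?_ (σ.forall_lt_apply_zero_iff).not.symm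
  have h01 : (σ 0 : ℕ) ≠ σ 1 := fun h => by simpa using σ.injective (Fin.ext h)
  have := (σ 0).isLt
  have := (σ 1).isLt
  have e0 : (⟨0, by omega⟩ : Fin (m + 2)) = 0 := rfl
  have e1 : (⟨1, by omega⟩ : Fin (m + 2)) = 1 := rfl
  simp only [e0, e1, Fin.ext_iff, Fin.val_last, Fin.val_castSucc]
  omega

def DominatesTail (k : ℕ) {n : ℕ} (π : Perm (Fin n)) : Prop :=
  ∀ i j : Fin n, (i : ℕ) + k ≤ n → (i : ℕ) + 2 ≤ j → π j < π i

lemma forall_avoids_iff_dominatesTail {k n : ℕ} (hk : 3 ≤ k) (π : Perm (Fin n)) :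
    (∀ σ : Perm (Fin k), (¬ ∀ t : Fin k, 2 ≤ (t : ℕ) → σ t < σ ⟨0, by omega⟩) → PAvoids π σ) ↔
      DominatesTail k π := by
  constructor
  · intro h i j hik hij
    by_contra hji
    obtain ⟨f, hf, hf0, t, ht, rfl⟩ := exists_strictMono_apply_zero_eq hk hik hij
    obtain ⟨σ, hσ⟩ := exists_perm_lt_iff_lt (π ∘ f) (π.injective.comp hf.injective)
    refine h σ (fun hall => hji ?_) ⟨f, hf, hσ⟩
    simpa [hf0] using (hσ t _).2 (hall t ht)
  · rintro hπ σ hσ ⟨f, hf, hπσ⟩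
    obtain ⟨m, rfl⟩ : ∃ m, k = m + 1 := ⟨k - 1, by omega⟩
    refine hσ fun t ht => (hπσ t 0).1 (hπ _ _ (Fin.val_add_le_of_strictMono hf) ?_)
    have h01 : (f 0 : ℕ) < f ⟨1, by omega⟩ := hf (Fin.lt_def.2 (by simp))
    have h1t : (f ⟨1, by omega⟩ : ℕ) < f t := hf (Fin.lt_def.2 (by dsimp only; omega))
    omega

def dropFirst {n : ℕ} (q : Fin (n + 1)) :
    {π : Perm (Fin (n + 1)) // π 0 = q} ≃ Perm (Fin n) :=
  ((equivCongr (finSuccEquiv n) (Equiv.refl _)).subtypeEquiv fun π => by simp).trans <|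
    (optionSubtype q).trans (equivCongr (Equiv.refl _) (finSuccAboveEquiv q).symm)

lemma succAbove_dropFirst_apply {n : ℕ} {q : Fin (n + 1)}
    (π : {π : Perm (Fin (n + 1)) // π 0 = q}) (i : Fin n) :
    q.succAbove (dropFirst q π i) = π.1 i.succ :=
  congrArg Subtype.val <| (finSuccAboveEquiv q).apply_symm_apply
    (optionSubtype q ⟨(finSuccEquiv n).symm.trans π.1, by simp [π.2]⟩ i)

lemma dominatesTail_iff_dropFirst {k n : ℕ} {q : Fin (n + 1)}
    (π : {π : Perm (Fin (n + 1)) // π 0 = q}) :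
    DominatesTail k π.1 ↔
      (k ≤ n + 1 → ∀ j : Fin (n + 1), 2 ≤ (j : ℕ) → π.1 j < q) ∧
        DominatesTail k (dropFirst q π) := by
  have hlt (i j : Fin n) : π.1 j.succ < π.1 i.succ ↔ dropFirst q π j < dropFirst q π i := by
    rw [← succAbove_dropFirst_apply, ← succAbove_dropFirst_apply, Fin.succAbove_lt_succAbove_iff]
  constructor
  · intro h
    exact ⟨fun hk j hj => (h 0 j (by simpa using hk) (by simpa using hj)).trans_eq π.2,
      fun i j hi hj => (hlt i j).1 (h i.succ j.succ (by rw [Fin.val_succ]; omega)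
        (by simp only [Fin.val_succ]; omega))⟩
  · rintro ⟨h0, h⟩ i j hi hj
    cases i using Fin.cases with
    | zero => exact (h0 (by simpa using hi) j (by simpa using hj)).trans_eq π.2.symm
    | succ i =>
      cases j using Fin.cases with
      | zero => simp at hj
      | succ j =>
        rw [Fin.val_succ] at hi
        simp only [Fin.val_succ] at hj
        exact (hlt i j).2 (h i j (by omega) (by omega))

lemma card_apply_zero_eq_and {n : ℕ} (q : Fin (n + 1)) {P : Perm (Fin (n + 1)) → Prop}
    {Q : Perm (Fin n) → Prop}
    (h : ∀ π : {π : Perm (Fin (n + 1)) // π 0 = q}, P π ↔ Q (dropFirst q π)) :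
    Nat.card {π : Perm (Fin (n + 1)) // π 0 = q ∧ P π} = Nat.card {σ // Q σ} :=
  Nat.card_congr <| (subtypeSubtypeEquivSubtypeInter _ _).symm.trans ((dropFirst q).subtypeEquiv h)

lemma card_apply_zero_eq_last_and_dominatesTail (k n : ℕ) :
    Nat.card {π : Perm (Fin (n + 1)) // π 0 = Fin.last n ∧ DominatesTail k π} =
      Nat.card {σ : Perm (Fin n) // DominatesTail k σ} := by
  refine card_apply_zero_eq_and _ fun π => (dominatesTail_iff_dropFirst π).trans (and_iff_right ?_)
  intro _ j hj
  refine lt_of_le_of_ne (Fin.le_last _) fun h => ?_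
  have := π.1.injective (h.trans π.2.symm)
  simp [this] at hj

lemma card_apply_zero_eq_castSucc_last_and_dominatesTail (k n : ℕ) :
    Nat.card {π : Perm (Fin (n + 2)) //
        π 0 = (Fin.last n).castSucc ∧ π 1 = Fin.last (n + 1) ∧ DominatesTail k π} =
      Nat.card {σ : Perm (Fin (n + 1)) // σ 0 = Fin.last n ∧ DominatesTail k σ} := by
  refine card_apply_zero_eq_and _ fun π => ?_
  have h1 : π.1 1 = Fin.last (n + 1) ↔ dropFirst _ π 0 = Fin.last n := by
    rw [← Fin.succAbove_right_inj (p := (Fin.last n).castSucc), succAbove_dropFirst_apply,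
      Fin.succAbove_castSucc_self, Fin.succ_last]
    rfl
  rw [dominatesTail_iff_dropFirst π, ← h1]
  refine and_congr_right fun h1 => and_iff_right fun _ j hj => ?_
  exact (π.1.forall_lt_apply_zero_iff.2 (Or.inr ⟨π.2, h1⟩) j hj).trans_eq π.2

lemma DominatesTail.apply_zero_cases {k n : ℕ} {π : Perm (Fin (n + 2))} (hπ : DominatesTail k π)
    (hk : k ≤ n + 2) :
    π 0 = Fin.last (n + 1) ∨ (π 0 = (Fin.last n).castSucc ∧ π 1 = Fin.last (n + 1)) :=
  π.forall_lt_apply_zero_iff.1 fun t ht => hπ 0 t (by simpa using hk) (by simpa using ht)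

lemma card_dominatesTail_of_lt {k n : ℕ} (h : n < k) :
    Nat.card {π : Perm (Fin n) // DominatesTail k π} = n.factorial := by
  have hall : ∀ π : Perm (Fin n), DominatesTail k π := fun π i j hi _ => absurd hi (by omega)
  rw [Nat.card_congr (subtypeUnivEquiv hall), Nat.card_perm, Nat.card_eq_fintype_card,
    Fintype.card_fin]

lemma card_dominatesTail_add_two {k n : ℕ} (hk : k ≤ n + 2) :
    Nat.card {π : Perm (Fin (n + 2)) // DominatesTail k π} =
      Nat.card {π : Perm (Fin (n + 1)) // DominatesTail k π} +
        Nat.card {π : Perm (Fin n) // DominatesTail k π} := by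
  classical
  have hsplit : ∀ π : Perm (Fin (n + 2)), DominatesTail k π ↔
      (π 0 = Fin.last (n + 1) ∧ DominatesTail k π) ∨
        (π 0 = (Fin.last n).castSucc ∧ π 1 = Fin.last (n + 1) ∧ DominatesTail k π) := fun π =>
    ⟨fun h => (h.apply_zero_cases hk).imp (⟨·, h⟩) fun h' => ⟨h'.1, h'.2, h⟩,
      by rintro (⟨-, h⟩ | ⟨-, -, h⟩) <;> exact h⟩
  have hdisj : Disjoint (fun π : Perm (Fin (n + 2)) => π 0 = Fin.last (n + 1) ∧ DominatesTail k π)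
      (fun π => π 0 = (Fin.last n).castSucc ∧ π 1 = Fin.last (n + 1) ∧ DominatesTail k π) := by
    simp only [Pi.disjoint_iff, Prop.disjoint_iff]
    rintro π ⟨⟨h, -⟩, h', -⟩
    exact (Fin.castSucc_lt_last _).ne (h'.symm.trans h)
  rw [Nat.card_congr ((subtypeEquivRight hsplit).trans (subtypeOrEquiv _ _ hdisj)), Nat.card_sum,
    card_apply_zero_eq_last_and_dominatesTail, card_apply_zero_eq_castSucc_last_and_dominatesTail,
    card_apply_zero_eq_last_and_dominatesTail]

lemma card_dominatesTail (K m : ℕ) :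
    Nat.card {π : Perm (Fin (K + 1 + m)) // DominatesTail (K + 3) π} =
      (K + 1).factorial * (Nat.fib (m + 2) + K * Nat.fib m) := by
  induction m using Nat.twoStepInduction with
  | zero => simp [card_dominatesTail_of_lt]
  | one =>
    rw [card_dominatesTail_of_lt (by omega), Nat.factorial_succ, Nat.fib_add_two, Nat.fib_one,
      Nat.fib_two]
    ring
  | more m ih₀ ih₁ =>
    rw [show K + 1 + (m + 1) = K + 1 + m + 1 from rfl] at ih₁
    rw [show K + 1 + (m + 2) = K + 1 + m + 2 from rfl, card_dominatesTail_add_two (by omega), ih₁,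
      ih₀, Nat.fib_add_two (n := m + 2), Nat.fib_add_two (n := m)]
    ring

/-- Let `k ≥ 3`.  The set `R^k_{k-1,k-1}` consists of the permutations `σ` of `{1,…,k}`
such that `σ(1) = σ(2) = k-1` (impossible), or `σ(1) < k-1`, or `σ(1) = k-1` and
`σ(2) < k-1` (positions zero-indexed below, one-line values given via `σ i + 1`).
For all `n ≥ k`,
`|S_n(R^k_{k-1,k-1})| = (k-2)! ⬝ (F_{n-k+4} + (k-3) F_{n-k+2})`. -/
theorem statement19 (k : ℕ) (hk : 3 ≤ k) (n : ℕ) (hn : k ≤ n) :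
    Nat.card {π : Equiv.Perm (Fin n) //
        ∀ σ : Equiv.Perm (Fin k),
          (((σ ⟨0, by omega⟩ : ℕ) + 1 = k - 1 ∧ (σ ⟨1, by omega⟩ : ℕ) + 1 = k - 1) ∨
            (σ ⟨0, by omega⟩ : ℕ) + 1 < k - 1 ∨
            ((σ ⟨0, by omega⟩ : ℕ) + 1 = k - 1 ∧ (σ ⟨1, by omega⟩ : ℕ) + 1 < k - 1)) →
          PAvoids π σ} =
      Nat.factorial (k - 2) * (Nat.fib (n - k + 4) + (k - 3) * Nat.fib (n - k + 2)) := by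
  have hR (π : Perm (Fin n)) : (∀ σ : Perm (Fin k), _ → PAvoids π σ) ↔ DominatesTail k π :=
    (forall_congr' fun σ => imp_congr_left (mem_R_iff hk σ)).trans
      (forall_avoids_iff_dominatesTail hk π)
  rw [Nat.card_congr (subtypeEquivRight hR)]
  obtain ⟨K, rfl⟩ : ∃ K, k = K + 3 := ⟨k - 3, by omega⟩
  obtain ⟨m, hm, rfl⟩ : ∃ m, 2 ≤ m ∧ n = K + 1 + m := ⟨n - (K + 1), by omega, by omega⟩
  rw [card_dominatesTail, show K + 1 + m - (K + 3) + 4 = m + 2 by omega,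
    show K + 1 + m - (K + 3) + 2 = m by omega, show K + 3 - 2 = K + 1 by omega,
    show K + 3 - 3 = K by omega]
end
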